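/- arXiv:1102.2724 — 4 statements merged into one kernel-verified Lean document; each statement's English description precedes it below -/
import Mathlib

section
/- Let γ ∈ (0, π/2), β ∈ (0, π/2), and let c > 0 satisfy cos(cβ) ≠ 0 and c·tan(γ) + tan(cβ) = 0. Then cβ > π/2; in particular c > π/(2β) > 1. -/
/-- Case C > 0 for a concave cylinder in a right wedge: a positive root c of
c·tanγ + tan(cβ) = 0 with cos(cβ) ≠ 0 satisfies cβ > π/2, hence c > π/(2β) > 1. -/
theorem concave_cylinder_positive_C_root_gt_one (γ β c : ℝ)
    (hγ : γ ∈ Set.Ioo 0 (Real.pi / 2)) (hβ : β ∈ Set.Ioo 0 (Real.pi / 2))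
    (hc : 0 < c) (hcos : Real.cos (c * β) ≠ 0)
    (hroot : c * Real.tan γ + Real.tan (c * β) = 0) :
    Real.pi / 2 < c * β ∧ Real.pi / (2 * β) < c ∧ 1 < Real.pi / (2 * β) := by
  obtain ⟨hγ0, hγ2⟩ := hγ
  obtain ⟨hβ0, hβ2⟩ := hβ
  have htanγ : 0 < Real.tan γ := Real.tan_pos_of_pos_of_lt_pi_div_two hγ0 hγ2
  have h1 : Real.pi / 2 < c * β := by
    by_contra h
    push_neg at h
    have hlt : c * β < Real.pi / 2 := lt_of_le_of_ne h (by
      intro he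
      exact hcos (by rw [he, Real.cos_pi_div_two]))
    have : 0 < Real.tan (c * β) :=
      Real.tan_pos_of_pos_of_lt_pi_div_two (mul_pos hc hβ0) hlt
    nlinarith [mul_pos hc htanγ]
  refine ⟨h1, ?_, ?_⟩
  · rw [div_lt_iff₀ (by linarith)]
    linarith
  · rw [lt_div_iff₀ (by linarith)]
    linarith
end

section
/- Let γ ∈ (0, π/2) and β > tan(γ). Then there exists a unique c > 0 such that tanh(βc) = c·tan(γ). (Equivalently, e^{2cβ} = (1 + c·tanγ)/(1 - c·tanγ) has a unique positive solution c.) -/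
/-!
Substituting `x = β c`, the equation becomes `tanh x / x = k` with `k = tan γ / β ∈ (0, 1)`.
Since `tanh` is strictly concave on `[0, ∞)` and vanishes at `0`, its secant slope
`tanh x / x` is strictly decreasing on `(0, ∞)`, which gives uniqueness. This slope tends to
`tanh' 0 = 1 > k` as `x → 0⁺` and is below `1 / x`, hence below `k` at `x = 1 / k`, so the
intermediate value theorem gives existence.
-/

open Real Set Filter Topology

theorem StrictConcaveOn.strictAntiOn_slope {f : ℝ → ℝ} {a : ℝ}
    (hf : StrictConcaveOn ℝ (Ici a) f) :
    StrictAntiOn (slope f a) (Ioi a) := fun x hx y hy hxy => by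
  simpa only [slope_def_field] using
    hf.secant_strict_mono self_mem_Ici (mem_Ici_of_Ioi hx) (mem_Ici_of_Ioi hy) hx.ne' hy.ne' hxy

namespace Real

theorem hasDerivAt_tanh (x : ℝ) : HasDerivAt tanh (cosh x ^ 2)⁻¹ x := by
  have h := (hasDerivAt_sinh x).div (hasDerivAt_cosh x) (cosh_pos x).ne'
  rw [show sinh / cosh = tanh from funext fun y => (tanh_eq_sinh_div_cosh y).symm] at h
  exact h.congr_deriv (by rw [← sq, ← sq, cosh_sq_sub_sinh_sq, one_div])

theorem continuous_tanh : Continuous tanh :=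
  continuous_iff_continuousAt.2 fun x => (hasDerivAt_tanh x).continuousAt

theorem strictConcaveOn_tanh : StrictConcaveOn ℝ (Ici 0) tanh := by
  refine StrictAntiOn.strictConcaveOn_of_deriv (convex_Ici 0) continuous_tanh.continuousOn ?_
  rw [interior_Ici, funext fun x => (hasDerivAt_tanh x).deriv]
  intro x hx y hy hxy
  dsimp only
  have hcosh : cosh x < cosh y := cosh_strictMonoOn (mem_Ici_of_Ioi hx) (mem_Ici_of_Ioi hy) hxy
  gcongr

theorem slope_tanh_zero (x : ℝ) : slope tanh 0 x = tanh x / x := by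
  simp [slope_def_field]

theorem tendsto_slope_tanh_zero_nhdsGT : Tendsto (slope tanh 0) (𝓝[>] 0) (𝓝 1) := by
  simpa using (hasDerivAt_tanh 0).tendsto_slope.mono_left (nhdsGT_le_nhdsNE 0)

theorem existsUnique_pos_tanh_eq_mul {k : ℝ} (hk0 : 0 < k) (hk1 : k < 1) :
    ∃! x, 0 < x ∧ tanh x = k * x := by
  have root_iff : ∀ x, 0 < x → (tanh x = k * x ↔ slope tanh 0 x = k) := fun x hx => by
    rw [slope_tanh_zero, div_eq_iff hx.ne', mul_comm]
  have hM : slope tanh 0 k⁻¹ < k := by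
    rw [slope_tanh_zero, div_inv_eq_mul, mul_comm]
    exact mul_lt_of_lt_one_right hk0 (tanh_lt_one _)
  obtain ⟨δ, hδk, hδ⟩ : ∃ δ, k < slope tanh 0 δ ∧ δ ∈ Ioo 0 k⁻¹ :=
    ((tendsto_slope_tanh_zero_nhdsGT.eventually (lt_mem_nhds hk1)).and
      (Ioo_mem_nhdsGT (inv_pos.2 hk0))).exists
  have hcont : ContinuousOn (slope tanh 0) (Icc δ k⁻¹) := by
    rw [funext slope_tanh_zero]
    exact continuous_tanh.continuousOn.div continuousOn_id fun x hx => (hδ.1.trans_le hx.1).ne'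
  obtain ⟨x, hx, hxk⟩ := intermediate_value_Icc' hδ.2.le hcont ⟨hM.le, hδk.le⟩
  have hx0 : 0 < x := hδ.1.trans_le hx.1
  refine ⟨x, ⟨hx0, (root_iff x hx0).2 hxk⟩, fun y ⟨hy0, hy⟩ => ?_⟩
  exact strictConcaveOn_tanh.strictAntiOn_slope.injOn hy0 hx0
    (((root_iff y hy0).1 hy).trans hxk.symm)

end Real

/-- For γ ∈ (0, π/2) and β > tanγ, the equation tanh(βc) = c·tanγ has a unique
positive solution c. -/
theorem unique_positive_root_tanh (γ β : ℝ)
    (hγ : γ ∈ Set.Ioo 0 (Real.pi / 2)) (hβ : Real.tan γ < β) :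
    ∃! c : ℝ, 0 < c ∧ Real.tanh (β * c) = c * Real.tan γ := by
  have ht : 0 < tan γ := tan_pos_of_pos_of_lt_pi_div_two hγ.1 hγ.2
  have hβ0 : 0 < β := ht.trans hβ
  obtain ⟨x, ⟨hx0, hx⟩, hunique⟩ :=
    existsUnique_pos_tanh_eq_mul (div_pos ht hβ0) ((div_lt_one hβ0).2 hβ)
  refine ⟨x / β, ⟨div_pos hx0 hβ0, ?_⟩, fun c ⟨hc0, hc⟩ => ?_⟩
  · rw [mul_div_cancel₀ x hβ0.ne', hx]
    ring
  · have hβc : β * c = x := hunique (β * c) ⟨mul_pos hβ0 hc0, by rw [hc]; field_simp⟩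
    rw [← hβc, mul_div_cancel_left₀ c hβ0.ne']
end

section
/- Let r > 0, β > 0, γ ∈ (0, π/2), and let c > 0 satisfy tanh(cβ) = c·tan(γ). Set T = 2πr/√(1 + c²) and define u : ℝ × ℝ → ℝ by u(t,s) = (e^{cs} - e^{-cs})·sin(2πt/T). Then for all (t,s): (i) ∂²u/∂t²(t,s) + (1/r²)·∂²u/∂s²(t,s) + (1/r²)·u(t,s) = 0; (ii) u(t,0) = 0; (iii) ∂u/∂s(t, β) - cot(γ)·u(t, β) = 0; (iv) u(t + T, s) = u(t, s). -/
/-!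
With `k = 2π / T` the function separates as `u t s = 2 sinh (c s) · sin (k t)`. Differentiating twice
multiplies the two factors by `-k²` and `c²`, and `k² r² = 1 + c²` by the choice of `T`, so
`L u = (-k² + c² / r² + 1 / r²) u = 0`. At `s = β` the Robin condition reads
`c cosh (c β) = cot γ · sinh (c β)`, which is the root equation `tanh (c β) = c tan γ`
multiplied by `cot γ cosh (c β)`.
-/

open Real

lemma deriv_deriv_const_mul_sin_const_mul (a k t : ℝ) :
    deriv (deriv fun t => a * sin (k * t)) t = -k ^ 2 * (a * sin (k * t)) := by
  simp only [deriv_const_mul_field', deriv_comp_mul_left, Real.deriv_sin, Real.deriv_cos,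
    smul_eq_mul]
  ring

lemma deriv_sinh_const_mul_mul_const (a c s : ℝ) :
    deriv (fun s => sinh (c * s) * a) s = c * cosh (c * s) * a := by
  simp only [deriv_mul_const_field', deriv_comp_mul_left, Real.deriv_sinh, smul_eq_mul]

lemma deriv_deriv_sinh_const_mul_mul_const (a c s : ℝ) :
    deriv (deriv fun s => sinh (c * s) * a) s = c ^ 2 * (sinh (c * s) * a) := by
  simp only [deriv_mul_const_field', deriv_const_mul_field', deriv_comp_mul_left, Real.deriv_sinh,
    Real.deriv_cosh, smul_eq_mul]
  ring

lemma sq_two_pi_div_period (r c : ℝ) :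
    (2 * π / (2 * π * r / √(1 + c ^ 2))) ^ 2 = (1 + c ^ 2) / r ^ 2 := by
  rw [div_div_eq_mul_div, mul_div_mul_left _ _ two_pi_pos.ne', div_pow, sq_sqrt (by positivity)]

lemma periodic_sin_two_pi_div_mul (T : ℝ) : Function.Periodic (fun t => sin (2 * π / T * t)) T := by
  intro t
  rcases eq_or_ne T 0 with rfl | hT
  · simp
  · simp only [mul_add, div_mul_cancel₀ _ hT, sin_add_two_pi]

lemma mul_cosh_eq_cot_mul_sinh_of_tanh_eq {x c γ : ℝ} (hsin : sin γ ≠ 0) (hcos : cos γ ≠ 0)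
    (h : tanh x = c * tan γ) : c * cosh x = cot γ * sinh x := by
  rw [tanh_eq_sinh_div_cosh, div_eq_iff (cosh_pos x).ne'] at h
  rw [h, cot_eq_cos_div_sin, tan_eq_sin_div_cos]
  field_simp

theorem jacobi_kernel_eigenfunction_robin_general (r β γ c T : ℝ) (u : ℝ → ℝ → ℝ)
    (hγ : γ ∈ Set.Ioo 0 (Real.pi / 2))
    (hroot : Real.tanh (c * β) = c * Real.tan γ)
    (hT : T = 2 * Real.pi * r / Real.sqrt (1 + c ^ 2))
    (hu : ∀ t s, u t s = (Real.exp (c * s) - Real.exp (-(c * s))) * Real.sin (2 * Real.pi * t / T)) :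
    (∀ t s, deriv (deriv (fun t' => u t' s)) t +
        (1 / r ^ 2) * deriv (deriv (fun s' => u t s')) s + (1 / r ^ 2) * u t s = 0) ∧
    (∀ t, u t 0 = 0) ∧
    (∀ t, deriv (fun s' => u t s') β - Real.cot γ * u t β = 0) ∧
    (∀ t s, u (t + T) s = u t s) := by
  have hk : (2 * π / T) ^ 2 = (1 + c ^ 2) / r ^ 2 := hT ▸ sq_two_pi_div_period r c
  have hsep : ∀ t s, u t s = 2 * sinh (c * s) * sin (2 * π / T * t) := fun t s => by
    rw [hu, sinh_eq]; ring_nf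
  have hu_t : ∀ s, (fun t' => u t' s) = fun t' => 2 * sinh (c * s) * sin (2 * π / T * t') :=
    fun s => funext (hsep · s)
  have hu_s : ∀ t, (fun s' => u t s') = fun s' => sinh (c * s') * (2 * sin (2 * π / T * t)) :=
    fun t => funext fun s' => by rw [hsep]; ring
  refine ⟨fun t s => ?_, fun t => by simp [hsep], fun t => ?_, fun t s => ?_⟩
  · rw [hu_t, hu_s, deriv_deriv_const_mul_sin_const_mul, deriv_deriv_sinh_const_mul_mul_const,
      hsep, hk]
    ring
  · have hsin : sin γ ≠ 0 := (sin_pos_of_pos_of_lt_pi hγ.1 (by linarith [pi_pos, hγ.2])).ne'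
    have hcos : cos γ ≠ 0 := (cos_pos_of_mem_Ioo ⟨by linarith [pi_pos, hγ.1], hγ.2⟩).ne'
    rw [hu_s, deriv_sinh_const_mul_mul_const, hsep,
      mul_cosh_eq_cot_mul_sinh_of_tanh_eq hsin hcos hroot]
    ring
  · rw [hsep, hsep, show sin (2 * π / T * (t + T)) = sin (2 * π / T * t) from
      periodic_sin_two_pi_div_mul T t]

/-- The eigenfunction u(t,s) = (e^{cs} - e^{-cs})·sin(2πt/T), with tanh(cβ) = c·tanγ and
T = 2πr/√(1+c²), lies in the kernel of the Jacobi operator L = ∂_tt + (1/r²)∂_ss + 1/r²,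
satisfies the Dirichlet condition at s = 0 and the Robin condition at s = β, and is
T-periodic. -/
theorem jacobi_kernel_eigenfunction_robin (r β γ c T : ℝ) (u : ℝ → ℝ → ℝ)
    (hr : 0 < r) (hβ : 0 < β) (hγ : γ ∈ Set.Ioo 0 (Real.pi / 2)) (hc : 0 < c)
    (hroot : Real.tanh (c * β) = c * Real.tan γ)
    (hT : T = 2 * Real.pi * r / Real.sqrt (1 + c ^ 2))
    (hu : ∀ t s, u t s = (Real.exp (c * s) - Real.exp (-(c * s))) * Real.sin (2 * Real.pi * t / T)) :
    (∀ t s, deriv (deriv (fun t' => u t' s)) t +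
        (1 / r ^ 2) * deriv (deriv (fun s' => u t s')) s + (1 / r ^ 2) * u t s = 0) ∧
    (∀ t, u t 0 = 0) ∧
    (∀ t, deriv (fun s' => u t s') β - Real.cot γ * u t β = 0) ∧
    (∀ t s, u (t + T) s = u t s) :=
  jacobi_kernel_eigenfunction_robin_general r β γ c T u hγ hroot hT hu
end

section
/- Let γ ∈ (0, π/2) and β > 0 with tan(γ) > β. Then the equation c·tan(γ) = tan(cβ) has at most one solution c in the open interval (0, π/(2β)). -/
open Real Set

lemma strictConvexOn_tan_Ico : StrictConvexOn ℝ (Ico 0 (π / 2)) Real.tan := by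
  apply StrictMonoOn.strictConvexOn_of_deriv (convex_Ico _ _)
  · exact Real.continuousOn_tan.mono fun x hx => by
      have : Real.cos x ≠ 0 := (Real.cos_pos_of_mem_Ioo
        ⟨by linarith [hx.1, Real.pi_pos], hx.2⟩).ne'
      exact this
  · rw [interior_Ico]
    intro x hx y hy hxy
    rw [Real.deriv_tan, Real.deriv_tan]
    have hcx : 0 < Real.cos x := Real.cos_pos_of_mem_Ioo ⟨by linarith [hx.1, Real.pi_pos], hx.2⟩
    have hcy : 0 < Real.cos y := Real.cos_pos_of_mem_Ioo ⟨by linarith [hy.1, Real.pi_pos], hy.2⟩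
    have : Real.cos y < Real.cos x := by
      apply Real.cos_lt_cos_of_nonneg_of_le_pi hx.1.le (by linarith [hy.2, Real.pi_pos]) hxy
    have h2 : Real.cos y ^ 2 < Real.cos x ^ 2 := by nlinarith
    exact one_div_lt_one_div_of_lt (by positivity) h2

/-- For γ ∈ (0, π/2) and 0 < β < tanγ, the equation c·tanγ = tan(cβ) has at most one
solution c in (0, π/(2β)). -/
theorem at_most_one_root_tan (γ β : ℝ)
    (hγ : γ ∈ Set.Ioo 0 (Real.pi / 2)) (hβ : 0 < β) (hβγ : β < Real.tan γ) :
    ∀ c₁ ∈ Set.Ioo 0 (Real.pi / (2 * β)), ∀ c₂ ∈ Set.Ioo 0 (Real.pi / (2 * β)),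
      c₁ * Real.tan γ = Real.tan (c₁ * β) → c₂ * Real.tan γ = Real.tan (c₂ * β) →
      c₁ = c₂ := by
  have key : ∀ c₁ ∈ Set.Ioo 0 (Real.pi / (2 * β)), ∀ c₂ ∈ Set.Ioo 0 (Real.pi / (2 * β)),
      c₁ * Real.tan γ = Real.tan (c₁ * β) → c₂ * Real.tan γ = Real.tan (c₂ * β) →
      c₁ < c₂ → False := by
    intro c₁ hc₁ c₂ hc₂ h₁ h₂ hlt
    have hmem : ∀ c ∈ Set.Ioo 0 (Real.pi / (2 * β)), c * β ∈ Set.Ico 0 (π / 2) := by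
      intro c hc
      constructor
      · exact mul_nonneg hc.1.le hβ.le
      · have := hc.2
        calc c * β < (Real.pi / (2 * β)) * β := by nlinarith [hc.2]
          _ = π / 2 := by field_simp
    have h0 : (0 : ℝ) ∈ Set.Ico 0 (π / 2) := ⟨le_refl 0, by positivity⟩
    have hs := strictConvexOn_tan_Ico.secant_strict_mono h0 (hmem c₁ hc₁) (hmem c₂ hc₂)
      (mul_pos hc₁.1 hβ).ne' (mul_pos hc₂.1 hβ).ne' (by nlinarith)
    rw [Real.tan_zero] at hs
    have e₁ : (Real.tan (c₁ * β) - 0) / (c₁ * β - 0) = Real.tan γ / β := by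
      rw [← h₁, sub_zero, sub_zero, mul_comm c₁ (Real.tan γ)]
      field_simp [hc₁.1.ne']
      
    have e₂ : (Real.tan (c₂ * β) - 0) / (c₂ * β - 0) = Real.tan γ / β := by
      rw [← h₂, sub_zero, sub_zero, mul_comm c₂ (Real.tan γ)]
      field_simp [hc₂.1.ne']
      
    rw [e₁, e₂] at hs
    exact lt_irrefl _ hs
  intro c₁ hc₁ c₂ hc₂ h₁ h₂
  rcases lt_trichotomy c₁ c₂ with h | h | h
  · exact absurd (key c₁ hc₁ c₂ hc₂ h₁ h₂ h) (fun x => x)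
  · exact h
  · exact absurd (key c₂ hc₂ c₁ hc₁ h₂ h₁ h) (fun x => x)
end
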